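/- arXiv:2011.01932 — 4 statements merged into one kernel-verified Lean document; each statement's English description precedes it below -/
import Mathlib

section
/- Energy identity (equation (EE)): Let (h, ξ) be a solution of the system (gf) on an interval [0,T) with h > 0 there. Define F(t) := (ḣ(t) − ξ̇(t))² + a·ḣ(t)² + 2a·B(ξ(t)). Then for every t ∈ [0,T), F(t) + 2aμ·∫₀ᵗ 𝒟(h(s), ξ(s))·ḣ(s)² ds = F(0). -/
open Real Filter Set MeasureTheory Metric

noncomputable section

/-- The potential `B(y) = ∫₀^y b(w) dw` of the elastic response `b`. -/
def potB (b : ℝ → ℝ) (y : ℝ) : ℝ := ∫ w in (0:ℝ)..y, b w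

/-- (B1): `b` is locally Lipschitz continuous. -/
def HypB1 (b : ℝ → ℝ) : Prop := LocallyLipschitz b

/-- (B2): the potential `B` is coercive, i.e. `B(y) → ∞` as `|y| → ∞`. -/
def HypB2 (b : ℝ → ℝ) : Prop := Tendsto (potB b) (cocompact ℝ) atTop

/-- (B3): the potential `B` is nonnegative. -/
def HypB3 (b : ℝ → ℝ) : Prop := ∀ y : ℝ, 0 ≤ potB b y

/-- (B4): `b(y)·y > 0` for all `y ≠ 0`. -/
def HypB4 (b : ℝ → ℝ) : Prop := ∀ y : ℝ, y ≠ 0 → 0 < b y * y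

/-- The drag factor `𝒟` maps `(0,∞) × ℝ` into `(0,∞)`. -/
def HypDpos (D : ℝ → ℝ → ℝ) : Prop := ∀ x ξ : ℝ, 0 < x → 0 < D x ξ

/-- (D1): `𝒟` is locally Lipschitz continuous on `(0,∞) × ℝ`. -/
def HypD1 (D : ℝ → ℝ → ℝ) : Prop :=
  ∀ p : ℝ × ℝ, 0 < p.1 → ∃ ε > 0, ∃ L : NNReal,
    LipschitzOnWith L (fun q : ℝ × ℝ => D q.1 q.2)
      (Metric.ball p ε ∩ {q : ℝ × ℝ | 0 < q.1})

/-- (D2): singular lower bound `𝒟(h,ξ) ≥ c·h^(−α)`, uniformly in `ξ`. -/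
def HypD2 (D : ℝ → ℝ → ℝ) (c α : ℝ) : Prop :=
  0 < c ∧ 1 ≤ α ∧ ∀ x ξ : ℝ, 0 < x → c * x ^ (-α) ≤ D x ξ

/-- (D3): `𝒟(h,ξ) = g(h)·h^(−α)` with `g : (0,∞) → [C₁,C₂]` locally Lipschitz. -/
def HypD3 (D : ℝ → ℝ → ℝ) (g : ℝ → ℝ) (C₁ C₂ α : ℝ) : Prop :=
  0 < C₁ ∧ C₁ ≤ C₂ ∧ 1 ≤ α ∧
  (∀ x : ℝ, 0 < x → ∃ ε > 0, ∃ L : NNReal,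
      LipschitzOnWith L g (Metric.ball x ε ∩ Set.Ioi 0)) ∧
  (∀ x : ℝ, 0 < x → g x ∈ Set.Icc C₁ C₂) ∧
  (∀ x ξ : ℝ, 0 < x → D x ξ = g x * x ^ (-α))

/-- (D4): `ξ ↦ 𝒟(h,ξ)` is nondecreasing for every `h > 0`. -/
def HypD4 (D : ℝ → ℝ → ℝ) : Prop :=
  ∀ x : ℝ, 0 < x → ∀ ξ₁ ξ₂ : ℝ, ξ₁ ≤ ξ₂ → D x ξ₁ ≤ D x ξ₂

/-- (D5): `𝒟(h,−δ₁) ≥ c₁·h^(−γ₁)` with `γ₁ ≥ α`. -/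
def HypD5 (D : ℝ → ℝ → ℝ) (α δ₁ c₁ γ₁ : ℝ) : Prop :=
  0 < δ₁ ∧ 0 < c₁ ∧ α ≤ γ₁ ∧ ∀ x : ℝ, 0 < x → c₁ * x ^ (-γ₁) ≤ D x (-δ₁)

/-- (D6): `𝒟(h,−δ₂) ≤ γ(h)·h^(−γ₁)` with `∫₀^h γ(y)/y dy → 0` as `h → 0⁺`. -/
def HypD6 (D : ℝ → ℝ → ℝ) (γ₁ δ₂ : ℝ) (γfun : ℝ → ℝ) : Prop :=
  0 < δ₂ ∧ (∀ y : ℝ, 0 < y → 0 ≤ γfun y) ∧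
  Tendsto (fun x : ℝ => ∫ y in (0:ℝ)..x, γfun y / y)
    (nhdsWithin 0 (Set.Ioi 0)) (nhds 0) ∧
  ∀ x : ℝ, 0 < x → D x (-δ₂) ≤ γfun x * x ^ (-γ₁)

/-- A global solution of the reduced system (gf) on `[0,∞)`:
`h, ξ` twice differentiable, `h > 0`, satisfying
`ḧ − ξ̈ = a·b(ξ)` and `ḧ = −b(ξ) − μ·𝒟(h,ξ)·ḣ`, with the given initial data. -/
def IsGlobalSolution (a μ : ℝ) (b : ℝ → ℝ) (D : ℝ → ℝ → ℝ)
    (h0 hd0 ξ0 ξd0 : ℝ) (h ξ : ℝ → ℝ) : Prop :=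
  (∀ t : ℝ, 0 ≤ t → 0 < h t) ∧
  (∀ t : ℝ, 0 ≤ t → DifferentiableAt ℝ h t ∧ DifferentiableAt ℝ (deriv h) t ∧
    DifferentiableAt ℝ ξ t ∧ DifferentiableAt ℝ (deriv ξ) t) ∧
  (∀ t : ℝ, 0 ≤ t → deriv (deriv h) t - deriv (deriv ξ) t = a * b (ξ t)) ∧
  (∀ t : ℝ, 0 ≤ t →
    deriv (deriv h) t = - b (ξ t) - μ * D (h t) (ξ t) * deriv h t) ∧
  h 0 = h0 ∧ deriv h 0 = hd0 ∧ ξ 0 = ξ0 ∧ deriv ξ 0 = ξd0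

/-- A solution of the nonlinear oscillator `ξ̈ + a·b(ξ) = 0` on `(t₀,∞)`
with `ξ(t₀) = 0` and `ξ̇(t₀) = v₀` (right derivative at `t₀`). -/
def IsOscSolution (a t₀ v₀ : ℝ) (b : ℝ → ℝ) (ψ : ℝ → ℝ) : Prop :=
  ψ t₀ = 0 ∧
  HasDerivWithinAt ψ v₀ (Set.Ici t₀) t₀ ∧
  ContinuousOn ψ (Set.Ici t₀) ∧
  Tendsto (deriv ψ) (nhdsWithin t₀ (Set.Ioi t₀)) (nhds v₀) ∧
  ∀ t : ℝ, t₀ < t → DifferentiableAt ℝ ψ t ∧ DifferentiableAt ℝ (deriv ψ) t ∧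
    deriv (deriv ψ) t + a * b (ψ t) = 0

/-- A solution of the reduced system (gf) on the interval `[0,T)`. -/
def IsSolutionOn (a μ T : ℝ) (b : ℝ → ℝ) (D : ℝ → ℝ → ℝ) (h ξ : ℝ → ℝ) : Prop :=
  (∀ t ∈ Set.Ico (0:ℝ) T, 0 < h t) ∧
  (∀ t ∈ Set.Ico (0:ℝ) T, DifferentiableAt ℝ h t ∧ DifferentiableAt ℝ (deriv h) t ∧
    DifferentiableAt ℝ ξ t ∧ DifferentiableAt ℝ (deriv ξ) t) ∧
  (∀ t ∈ Set.Ico (0:ℝ) T, deriv (deriv h) t - deriv (deriv ξ) t = a * b (ξ t)) ∧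
  (∀ t ∈ Set.Ico (0:ℝ) T,
    deriv (deriv h) t = - b (ξ t) - μ * D (h t) (ξ t) * deriv h t)

/-! The energy `F` of the system (gf) decreases at the rate `2aμ·𝒟(h,ξ)·ḣ²`: differentiating `F`
and substituting both equations of (gf), the terms in `b(ξ)` cancel. The identity is then the
fundamental theorem of calculus on `[0,t]`, the integrand being continuous because `h > 0` keeps
`(h,ξ)` in the domain where `𝒟` is continuous. -/

theorem hasDerivAt_potB {b : ℝ → ℝ} (hb : Continuous b) (y : ℝ) :
    HasDerivAt (potB b) (b y) y :=
  intervalIntegral.integral_hasDerivAt_right (hb.intervalIntegrable 0 y)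
    (hb.stronglyMeasurableAtFilter _ _) hb.continuousAt

def gfEnergy (a : ℝ) (b : ℝ → ℝ) (h ξ : ℝ → ℝ) (t : ℝ) : ℝ :=
  (deriv h t - deriv ξ t) ^ 2 + a * deriv h t ^ 2 + 2 * a * potB b (ξ t)

theorem hasDerivAt_gfEnergy {a : ℝ} {b : ℝ → ℝ} {h ξ : ℝ → ℝ} {s : ℝ} (hb : Continuous b)
    (hh' : DifferentiableAt ℝ (deriv h) s) (hξ : DifferentiableAt ℝ ξ s)
    (hξ' : DifferentiableAt ℝ (deriv ξ) s) :
    HasDerivAt (gfEnergy a b h ξ)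
      (2 * (deriv h s - deriv ξ s) * (deriv (deriv h) s - deriv (deriv ξ) s)
        + a * (2 * deriv h s * deriv (deriv h) s) + 2 * a * (b (ξ s) * deriv ξ s)) s := by
  have hkin := (hh'.hasDerivAt.sub hξ'.hasDerivAt).fun_pow 2
  have hh'sq := hh'.hasDerivAt.fun_pow 2
  have hpot := (hasDerivAt_potB hb (ξ s)).comp s hξ.hasDerivAt
  simp only [Nat.cast_ofNat, Nat.reduceSub, pow_one] at hkin hh'sq
  exact (hkin.add (hh'sq.const_mul a)).add (hpot.const_mul (2 * a))

namespace IsSolutionOn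

variable {a μ T : ℝ} {b : ℝ → ℝ} {D : ℝ → ℝ → ℝ} {h ξ : ℝ → ℝ}

theorem hasDerivAt_gfEnergy (hsol : IsSolutionOn a μ T b D h ξ) (hb : Continuous b) {s : ℝ}
    (hs : s ∈ Ico 0 T) :
    HasDerivAt (gfEnergy a b h ξ) (-(2 * a * μ) * (D (h s) (ξ s) * deriv h s ^ 2)) s := by
  obtain ⟨-, hdiff, hgap, hh⟩ := hsol
  obtain ⟨-, hh', hξ, hξ'⟩ := hdiff s hs
  convert _root_.hasDerivAt_gfEnergy hb hh' hξ hξ' using 1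
  rw [hgap s hs, hh s hs]
  ring

theorem continuousOn_dissipation (hsol : IsSolutionOn a μ T b D h ξ)
    (hD : ContinuousOn (fun q : ℝ × ℝ => D q.1 q.2) {q : ℝ × ℝ | 0 < q.1}) :
    ContinuousOn (fun s => D (h s) (ξ s) * deriv h s ^ 2) (Ico 0 T) := by
  intro s hs
  obtain ⟨hpos, hdiff, -, -⟩ := hsol
  obtain ⟨hh, hh', hξ, -⟩ := hdiff s hs
  have hDat : ContinuousAt (fun q : ℝ × ℝ => D q.1 q.2) (h s, ξ s) :=
    hD.continuousAt ((isOpen_lt continuous_const continuous_fst).mem_nhds (hpos s hs))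
  have hDpath : ContinuousAt (fun u => D (h u) (ξ u)) s :=
    hDat.tendsto.comp (hh.continuousAt.prodMk hξ.continuousAt)
  exact (hDpath.mul (hh'.continuousAt.pow 2)).continuousWithinAt

end IsSolutionOn

theorem energy_identity_general
    (a μ T : ℝ) (b : ℝ → ℝ) (D : ℝ → ℝ → ℝ) (h ξ : ℝ → ℝ)
    (hb : Continuous b)
    (hD : ContinuousOn (fun q : ℝ × ℝ => D q.1 q.2) {q : ℝ × ℝ | 0 < q.1})
    (hsol : IsSolutionOn a μ T b D h ξ) :
    ∀ t ∈ Set.Ico (0:ℝ) T,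
      ((deriv h t - deriv ξ t) ^ 2 + a * (deriv h t) ^ 2 + 2 * a * potB b (ξ t))
          + 2 * a * μ * ∫ s in (0:ℝ)..t, D (h s) (ξ s) * (deriv h s) ^ 2
        = (deriv h 0 - deriv ξ 0) ^ 2 + a * (deriv h 0) ^ 2
            + 2 * a * potB b (ξ 0) := by
  rintro t ⟨ht0, htT⟩
  have hsub : uIcc 0 t ⊆ Ico 0 T := by
    rw [uIcc_of_le ht0]
    exact Icc_subset_Ico_right htT
  have hFTC := intervalIntegral.integral_eq_sub_of_hasDerivAt
    (fun s hs => hsol.hasDerivAt_gfEnergy hb (hsub hs))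
    (((hsol.continuousOn_dissipation hD).mono hsub).intervalIntegrable.const_mul (-(2 * a * μ)))
  rw [intervalIntegral.integral_const_mul] at hFTC
  unfold gfEnergy at hFTC
  linarith

/-- The energy identity (EE): with
`F(t) = (ḣ(t) − ξ̇(t))² + a·ḣ(t)² + 2a·B(ξ(t))`, one has
`F(t) + 2aμ·∫₀ᵗ 𝒟(h(s),ξ(s))·ḣ(s)² ds = F(0)` on `[0,T)`. -/
theorem energy_identity
    (a μ T : ℝ) (b : ℝ → ℝ) (D : ℝ → ℝ → ℝ) (h ξ : ℝ → ℝ)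
    (ha : 0 < a) (hμ : 0 < μ) (hT : 0 < T)
    (hb : Continuous b)
    (hD : ContinuousOn (fun q : ℝ × ℝ => D q.1 q.2) {q : ℝ × ℝ | 0 < q.1})
    (hDpos : HypDpos D)
    (hsol : IsSolutionOn a μ T b D h ξ) :
    ∀ t ∈ Set.Ico (0:ℝ) T,
      ((deriv h t - deriv ξ t) ^ 2 + a * (deriv h t) ^ 2 + 2 * a * potB b (ξ t))
          + 2 * a * μ * ∫ s in (0:ℝ)..t, D (h s) (ξ s) * (deriv h s) ^ 2
        = (deriv h 0 - deriv ξ 0) ^ 2 + a * (deriv h 0) ^ 2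
            + 2 * a * potB b (ξ 0) :=
  energy_identity_general a μ T b D h ξ hb hD hsol
end
end

section
/- Identification of the limit before impact, case ḣ₀ ≥ 0 (Lemma 3.6(i)): Assume (B1), (B2), (D1), (D2), b(0) = 0, initial data ξ₀ = ξ̇₀ = 0, h₀ > 0, ḣ₀ ≥ 0. Let μ_n → 0⁺, let (h_n, ξ_n) be the corresponding global solutions of (gf), and suppose h_n → h and ξ_n → ξ uniformly on compact subsets of [0,∞). Then h(t) = h₀ + ḣ₀·t and ξ(t) = 0 for every t ≥ 0. -/
open Real Filter Set MeasureTheory Metric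

noncomputable section

/-!
Write `w = (h - h₀ - ḣ₀ t, ξ, ξ̇, ḣ - ḣ₀)` for the deviation of a solution from free flight. It
vanishes at `t = 0`, and as long as `h` stays in a compact subset of `(0,∞)` and `ξ` stays bounded,
`𝒟(h,ξ)` and `b(ξ)/ξ` are bounded, so that `|ẇ| ≤ K |w| + |μ| C |ḣ₀|`. Grönwall's inequality then
makes `w = O(μ)` on compact time intervals, which identifies the limit as free flight on every
interval `[0,T]` on which the limit `h` stays above `h₀/2`. Since `ḣ₀ ≥ 0`, free flight keeps
`h ≥ h₀`, and a continuity argument shows that the limit never comes down to `h₀/2`.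
-/

open scoped Topology

lemma LocallyLipschitz.exists_abs_le_mul_abs {b : ℝ → ℝ} (hb : LocallyLipschitz b)
    (hb0 : b 0 = 0) (lo hi : ℝ) : ∃ L : ℝ, 0 ≤ L ∧ ∀ y ∈ Icc lo hi, |b y| ≤ L * |y| := by
  obtain ⟨K, hK⟩ :=
    hb.locallyLipschitzOn.exists_lipschitzOnWith_of_compact (isCompact_Icc.insert 0)
  refine ⟨K, K.2, fun y hy => ?_⟩
  simpa [Real.dist_eq, hb0] using hK.dist_le_mul y (.inr hy) 0 (mem_insert 0 _)

lemma HypD1.continuousOn {D : ℝ → ℝ → ℝ} (hD : HypD1 D) :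
    ContinuousOn (fun p : ℝ × ℝ => D p.1 p.2) {p | 0 < p.1} := by
  intro p hp
  obtain ⟨ε, hε, L, hL⟩ := hD p hp
  exact (hL.continuousOn p ⟨mem_ball_self hε, hp⟩).mono_of_mem_nhdsWithin
    (mem_nhdsWithin.2 ⟨ball p ε, isOpen_ball, mem_ball_self hε, subset_rfl⟩)

lemma HypD1.exists_abs_le {D : ℝ → ℝ → ℝ} (hD : HypD1 D) {δ H : ℝ} (hδ : 0 < δ) (lo hi : ℝ) :
    ∃ C : ℝ, ∀ x y, x ∈ Icc δ H → y ∈ Icc lo hi → |D x y| ≤ C := by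
  obtain ⟨C, hC⟩ := (isCompact_Icc.prod isCompact_Icc).exists_bound_of_continuousOn
    (hD.continuousOn.mono fun p hp => hδ.trans_le (mem_prod.1 hp).1.1)
  exact ⟨C, fun x y hx hy => hC (x, y) ⟨hx, hy⟩⟩

lemma TendstoUniformlyOn.eventually_mem_Icc {ι α : Type*} {p : Filter ι} {F : ι → α → ℝ}
    {f : α → ℝ} {s : Set α} (hF : TendstoUniformlyOn F f p s) {lo hi ε : ℝ} (hε : 0 < ε)
    (hf : ∀ x ∈ s, f x ∈ Icc lo hi) : ∀ᶠ n in p, ∀ x ∈ s, F n x ∈ Icc (lo - ε) (hi + ε) := by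
  filter_upwards [Metric.tendstoUniformlyOn_iff.1 hF ε hε] with n hn x hx
  have hdist := abs_lt.1 (Real.dist_eq _ _ ▸ hn x hx)
  exact ⟨by linarith [(hf x hx).1], by linarith [(hf x hx).2]⟩

lemma ContinuousOn.lt_of_forall_le_imp_lt {f : ℝ → ℝ} {c t : ℝ}
    (hf : ContinuousOn f (Icc 0 t)) (hf0 : c < f 0)
    (hstep : ∀ T ∈ Icc 0 t, (∀ s ∈ Icc 0 T, c ≤ f s) → c < f T) : ∀ s ∈ Icc 0 t, c < f s := by
  by_contra! hbad
  set S := Icc 0 t ∩ f ⁻¹' Iic c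
  have hSbdd : BddBelow S := ⟨0, fun s hs => hs.1.1⟩
  have hσ : sInf S ∈ S := (hf.preimage_isClosed_of_isClosed isClosed_Icc isClosed_Iic).csInf_mem
    hbad hSbdd
  have hσ_le : ∀ s ∈ Icc 0 (sInf S), f s ≤ c → sInf S ≤ s := fun s hs hfs =>
    csInf_le hSbdd ⟨⟨hs.1, hs.2.trans hσ.1.2⟩, hfs⟩
  -- by the intermediate value theorem, `f` first reaches `c` exactly at `sInf S`
  obtain ⟨r, hr, hfr⟩ := intermediate_value_Icc' hσ.1.1
    (hf.mono (Icc_subset_Icc_right hσ.1.2)) ⟨hσ.2, hf0.le⟩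
  have hfσ : f (sInf S) = c := le_antisymm hr.2 (hσ_le r hr hfr.le) ▸ hfr
  refine (hstep _ hσ.1 fun s hs => ?_).ne' hfσ
  by_contra! hlt
  exact hlt.ne (le_antisymm hs.2 (hσ_le s hs hlt.le) ▸ hfσ)

section Solutions

variable {a μ h0 hd0 ξ0 ξd0 : ℝ} {b : ℝ → ℝ} {D : ℝ → ℝ → ℝ} {h ξ : ℝ → ℝ}

lemma IsGlobalSolution.continuousOn_fst
    (hsol : IsGlobalSolution a μ b D h0 hd0 ξ0 ξd0 h ξ) : ContinuousOn h (Ici 0) :=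
  fun s hs => ((hsol.2.1 s hs).1.continuousAt).continuousWithinAt

lemma IsGlobalSolution.continuousOn_snd
    (hsol : IsGlobalSolution a μ b D h0 hd0 ξ0 ξd0 h ξ) : ContinuousOn ξ (Ici 0) :=
  fun s hs => ((hsol.2.1 s hs).2.2.1.continuousAt).continuousWithinAt

end Solutions

section Deviation

variable {a μ h0 hd0 ξ0 ξd0 L C T : ℝ} {b : ℝ → ℝ} {D : ℝ → ℝ → ℝ} {h ξ : ℝ → ℝ}

def deviation (h0 hd0 : ℝ) (h ξ : ℝ → ℝ) (t : ℝ) : ℝ × ℝ × ℝ × ℝ :=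
  (h t - (h0 + hd0 * t), ξ t, deriv ξ t, deriv h t - hd0)

lemma IsGlobalSolution.hasDerivAt_deviation
    (hsol : IsGlobalSolution a μ b D h0 hd0 ξ0 ξd0 h ξ) {s : ℝ} (hs : 0 ≤ s) :
    HasDerivAt (deviation h0 hd0 h ξ)
      (deriv h s - hd0, deriv ξ s, deriv (deriv ξ) s, deriv (deriv h) s) s := by
  obtain ⟨dh, dh', dξ, dξ'⟩ := hsol.2.1 s hs
  have hflight : HasDerivAt (fun s => h0 + hd0 * s) hd0 s := by
    simpa using ((hasDerivAt_id s).const_mul hd0).const_add h0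
  exact (dh.hasDerivAt.sub hflight).prodMk
    (dξ.hasDerivAt.prodMk (dξ'.hasDerivAt.prodMk (dh'.hasDerivAt.sub_const hd0)))

lemma IsGlobalSolution.abs_deriv_deriv_le
    (hsol : IsGlobalSolution a μ b D h0 hd0 ξ0 ξd0 h ξ) {s : ℝ} (hs : 0 ≤ s) (hμ : |μ| ≤ 1)
    (hb : |b (ξ s)| ≤ L * |ξ s|) (hD : |D (h s) (ξ s)| ≤ C) :
    |deriv (deriv h) s| ≤ L * |ξ s| + C * |deriv h s - hd0| + |μ| * C * |hd0| := by
  obtain ⟨-, -, -, hacc, -⟩ := hsol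
  have hμD : |μ| * |D (h s) (ξ s)| ≤ |μ| * C := mul_le_mul_of_nonneg_left hD (abs_nonneg μ)
  have hC : 0 ≤ C := (abs_nonneg _).trans hD
  have e : deriv (deriv h) s = -b (ξ s) - μ * D (h s) (ξ s) * (deriv h s - hd0)
      - μ * D (h s) (ξ s) * hd0 := by rw [hacc s hs]; ring
  calc |deriv (deriv h) s|
      ≤ |b (ξ s)| + |μ| * |D (h s) (ξ s)| * |deriv h s - hd0|
        + |μ| * |D (h s) (ξ s)| * |hd0| := by
        rw [e]
        refine ((abs_sub _ _).trans (add_le_add (abs_sub _ _) le_rfl)).trans_eq ?_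
        simp only [abs_neg, abs_mul]
    _ ≤ L * |ξ s| + C * |deriv h s - hd0| + |μ| * C * |hd0| := by
        gcongr
        exact hμD.trans (mul_le_of_le_one_left hC hμ)

lemma IsGlobalSolution.norm_deriv_deviation_le
    (hsol : IsGlobalSolution a μ b D h0 hd0 ξ0 ξd0 h ξ) {s : ℝ} (hs : 0 ≤ s) (hμ : |μ| ≤ 1)
    (hL : 0 ≤ L) (hb : |b (ξ s)| ≤ L * |ξ s|) (hD : |D (h s) (ξ s)| ≤ C) :
    ‖((deriv h s - hd0, deriv ξ s, deriv (deriv ξ) s, deriv (deriv h) s) : ℝ × ℝ × ℝ × ℝ)‖ ≤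
      (1 + (1 + |a|) * L + C) * ‖deviation h0 hd0 h ξ s‖ + |μ| * C * |hd0| := by
  set N := ‖deviation h0 hd0 h ξ s‖
  have hξN : |ξ s| ≤ N := (norm_fst_le _).trans (norm_snd_le (deviation h0 hd0 h ξ s))
  have hξ'N : |deriv ξ s| ≤ N :=
    ((norm_fst_le _).trans (norm_snd_le _)).trans (norm_snd_le (deviation h0 hd0 h ξ s))
  have hwN : |deriv h s - hd0| ≤ N :=
    ((norm_snd_le _).trans (norm_snd_le _)).trans (norm_snd_le (deviation h0 hd0 h ξ s))
  have hh'' := hsol.abs_deriv_deriv_le hs hμ hb hD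
  obtain ⟨-, -, hdiffacc, -⟩ := hsol
  have hξ'' : |deriv (deriv ξ) s| ≤ |deriv (deriv h) s| + |a| * (L * |ξ s|) := by
    have e : deriv (deriv ξ) s = deriv (deriv h) s - a * b (ξ s) := by
      linarith [hdiffacc s hs]
    rw [e]
    exact (abs_sub _ _).trans (add_le_add le_rfl (by rw [abs_mul]; gcongr))
  have hC : 0 ≤ C := (abs_nonneg _).trans hD
  have hN : 0 ≤ N := norm_nonneg _
  have hε : 0 ≤ |μ| * C * |hd0| := by positivity
  have hLξ : L * |ξ s| ≤ L * N := by gcongr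
  have hCw : C * |deriv h s - hd0| ≤ C * N := by gcongr
  have haLξ : |a| * (L * |ξ s|) ≤ |a| * (L * N) := by gcongr
  have hLN : 0 ≤ L * N := by positivity
  have hCN : 0 ≤ C * N := by positivity
  have haLN : 0 ≤ |a| * (L * N) := by positivity
  have hKN : (1 + (1 + |a|) * L + C) * N = N + L * N + |a| * (L * N) + C * N := by ring
  simp only [norm_prod_le_iff, Real.norm_eq_abs]
  refine ⟨?_, ?_, ?_, ?_⟩ <;> linarith

theorem IsGlobalSolution.abs_deviation_le_gronwallBound
    (hsol : IsGlobalSolution a μ b D h0 hd0 0 0 h ξ) (hμ : |μ| ≤ 1) (hL : 0 ≤ L)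
    (hb : ∀ s ∈ Icc 0 T, |b (ξ s)| ≤ L * |ξ s|) (hD : ∀ s ∈ Icc 0 T, |D (h s) (ξ s)| ≤ C) :
    ∀ t ∈ Icc 0 T,
      |h t - (h0 + hd0 * t)| ≤ gronwallBound 0 (1 + (1 + |a|) * L + C) (|μ| * C * |hd0|) t ∧
      |ξ t| ≤ gronwallBound 0 (1 + (1 + |a|) * L + C) (|μ| * C * |hd0|) t := by
  have hgron := norm_le_gronwallBound_of_norm_deriv_right_le (δ := 0)
    (fun s hs => (hsol.hasDerivAt_deviation hs.1).continuousAt.continuousWithinAt)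
    (fun s hs => (hsol.hasDerivAt_deviation hs.1).hasDerivWithinAt)
    (by simp [deviation, hsol.2.2.2.2])
    (fun s hs => hsol.norm_deriv_deviation_le hs.1 hμ hL (hb s (Ico_subset_Icc_self hs))
      (hD s (Ico_subset_Icc_self hs)))
  intro t ht
  have hXt := sub_zero t ▸ hgron t ht
  exact ⟨(norm_fst_le (deviation h0 hd0 h ξ t)).trans hXt,
    ((norm_fst_le _).trans (norm_snd_le (deviation h0 hd0 h ξ t))).trans hXt⟩

end Deviation

section Limit

variable {a h0 hd0 δ T : ℝ} {b : ℝ → ℝ} {D : ℝ → ℝ → ℝ} {μseq : ℕ → ℝ} {h ξ : ℕ → ℝ → ℝ}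
  {hl ξl : ℝ → ℝ}

lemma exists_eventually_abs_deviation_le (hb0 : b 0 = 0) (hB1 : HypB1 b) (hD1 : HypD1 D)
    (hμ0 : Tendsto μseq atTop (𝓝 0))
    (hsol : ∀ n, IsGlobalSolution a (μseq n) b D h0 hd0 0 0 (h n) (ξ n))
    (hconvh : TendstoUniformlyOn h hl atTop (Icc 0 T))
    (hconvξ : TendstoUniformlyOn ξ ξl atTop (Icc 0 T))
    (hδ : 0 < δ) (hlow : ∀ s ∈ Icc 0 T, δ ≤ hl s) :
    ∃ K C : ℝ, ∀ᶠ n in atTop, ∀ t ∈ Icc 0 T,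
      |h n t - (h0 + hd0 * t)| ≤ gronwallBound 0 K (|μseq n| * C * |hd0|) t ∧
      |ξ n t| ≤ gronwallBound 0 K (|μseq n| * C * |hd0|) t := by
  have hlc : ContinuousOn hl (Icc 0 T) := hconvh.continuousOn
    (.of_forall fun n => (hsol n).continuousOn_fst.mono Icc_subset_Ici_self)
  have hξlc : ContinuousOn ξl (Icc 0 T) := hconvξ.continuousOn
    (.of_forall fun n => (hsol n).continuousOn_snd.mono Icc_subset_Ici_self)
  obtain ⟨H, hH⟩ := isCompact_Icc.bddAbove_image hlc
  obtain ⟨lo, hlo⟩ := isCompact_Icc.bddBelow_image hξlc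
  obtain ⟨hi, hhi⟩ := isCompact_Icc.bddAbove_image hξlc
  obtain ⟨L, hL0, hL⟩ := hB1.exists_abs_le_mul_abs hb0 (lo - 1) (hi + 1)
  obtain ⟨C, hC⟩ := hD1.exists_abs_le (H := H + δ / 2) (sub_pos.2 (half_lt_self hδ))
    (lo - 1) (hi + 1)
  refine ⟨1 + (1 + |a|) * L + C, C, ?_⟩
  filter_upwards [hconvh.eventually_mem_Icc (half_pos hδ)
      (fun s hs => ⟨hlow s hs, hH (mem_image_of_mem _ hs)⟩),
    hconvξ.eventually_mem_Icc one_pos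
      (fun s hs => ⟨hlo (mem_image_of_mem _ hs), hhi (mem_image_of_mem _ hs)⟩),
    (tendsto_zero_iff_abs_tendsto_zero _).1 hμ0 |>.eventually (ge_mem_nhds one_pos)]
    with n hhn hξn hμn
  exact (hsol n).abs_deviation_le_gronwallBound hμn hL0 (fun s hs => hL _ (hξn s hs))
    (fun s hs => hC _ _ (hhn s hs) (hξn s hs))

theorem limit_identification_on_Icc_of_le (hb0 : b 0 = 0) (hB1 : HypB1 b) (hD1 : HypD1 D)
    (hμ0 : Tendsto μseq atTop (𝓝 0))
    (hsol : ∀ n, IsGlobalSolution a (μseq n) b D h0 hd0 0 0 (h n) (ξ n))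
    (hconvh : TendstoUniformlyOn h hl atTop (Icc 0 T))
    (hconvξ : TendstoUniformlyOn ξ ξl atTop (Icc 0 T))
    (hδ : 0 < δ) (hlow : ∀ s ∈ Icc 0 T, δ ≤ hl s) :
    ∀ t ∈ Icc 0 T, hl t = h0 + hd0 * t ∧ ξl t = 0 := by
  obtain ⟨K, C, hest⟩ :=
    exists_eventually_abs_deviation_le hb0 hB1 hD1 hμ0 hsol hconvh hconvξ hδ hlow
  intro t ht
  have hG : Tendsto (fun n => gronwallBound 0 K (|μseq n| * C * |hd0|) t) atTop (𝓝 0) := by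
    have hε : Tendsto (fun n => |μseq n| * C * |hd0|) atTop (𝓝 0) := by
      simpa using (((tendsto_zero_iff_abs_tendsto_zero _).1 hμ0).mul_const C).mul_const |hd0|
    have := ((gronwallBound_continuous_ε 0 K t).tendsto 0).comp hε
    rwa [gronwallBound_ε0_δ0] at this
  have hflight : Tendsto (fun n => h n t) atTop (𝓝 (h0 + hd0 * t)) := by
    refine tendsto_sub_nhds_zero_iff.1 (squeeze_zero_norm' ?_ hG)
    filter_upwards [hest] with n hn using (hn t ht).1
  have hrest : Tendsto (fun n => ξ n t) atTop (𝓝 0) :=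
    squeeze_zero_norm' (by filter_upwards [hest] with n hn using (hn t ht).2) hG
  exact ⟨tendsto_nhds_unique (hconvh.tendsto_at ht) hflight,
    tendsto_nhds_unique (hconvξ.tendsto_at ht) hrest⟩

end Limit

theorem limit_identification_nonneg_velocity_general
    (a h0 hd0 : ℝ) (b : ℝ → ℝ) (D : ℝ → ℝ → ℝ)
    (μseq : ℕ → ℝ) (h ξ : ℕ → ℝ → ℝ) (hl ξl : ℝ → ℝ)
    (hh0 : 0 < h0) (hhd0 : 0 ≤ hd0)
    (hb0 : b 0 = 0)
    (hB1 : HypB1 b)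
    (hD1 : HypD1 D)
    (hμ0 : Tendsto μseq atTop (nhds 0))
    (hsol : ∀ n, IsGlobalSolution a (μseq n) b D h0 hd0 0 0 (h n) (ξ n))
    (hconvh : ∀ K : Set ℝ, IsCompact K → K ⊆ Set.Ici 0 →
      TendstoUniformlyOn (fun n t => h n t) hl atTop K)
    (hconvξ : ∀ K : Set ℝ, IsCompact K → K ⊆ Set.Ici 0 →
      TendstoUniformlyOn (fun n t => ξ n t) ξl atTop K) :
    ∀ t : ℝ, 0 ≤ t → hl t = h0 + hd0 * t ∧ ξl t = 0 := by
  have hconvhT (T : ℝ) := hconvh (Icc 0 T) isCompact_Icc Icc_subset_Ici_self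
  have key (T : ℝ) : (∀ s ∈ Icc 0 T, h0 / 2 ≤ hl s) →
      ∀ s ∈ Icc 0 T, hl s = h0 + hd0 * s ∧ ξl s = 0 :=
    limit_identification_on_Icc_of_le hb0 hB1 hD1 hμ0 hsol (hconvhT T)
      (hconvξ (Icc 0 T) isCompact_Icc Icc_subset_Ici_self) (half_pos hh0)
  have hl0 : hl 0 = h0 := tendsto_nhds_unique ((hconvhT 0).tendsto_at (left_mem_Icc.2 le_rfl))
    (tendsto_const_nhds.congr fun n => ((hsol n).2.2.2.2.1).symm)
  intro t ht
  have hlow : ∀ s ∈ Icc 0 t, h0 / 2 < hl s := by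
    refine ((hconvhT t).continuousOn (.of_forall fun n =>
      (hsol n).continuousOn_fst.mono Icc_subset_Ici_self)).lt_of_forall_le_imp_lt
      (by linarith) fun T hT hle => ?_
    have := mul_nonneg hhd0 hT.1
    linarith [(key T hle T (right_mem_Icc.2 hT.1)).1]
  exact key t (fun s hs => (hlow s hs).le) t (right_mem_Icc.2 ht)

/-- Lemma 3.6(i): identification of the vanishing-viscosity limit for `ḣ₀ ≥ 0`:
the limit is `h(t) = h₀ + ḣ₀·t`, `ξ(t) = 0` for all `t ≥ 0`. -/
theorem limit_identification_nonneg_velocity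
    (a h0 hd0 c α : ℝ) (b : ℝ → ℝ) (D : ℝ → ℝ → ℝ)
    (μseq : ℕ → ℝ) (h ξ : ℕ → ℝ → ℝ) (hl ξl : ℝ → ℝ)
    (ha : 0 < a) (hh0 : 0 < h0) (hhd0 : 0 ≤ hd0)
    (hb0 : b 0 = 0)
    (hB1 : HypB1 b) (hB2 : HypB2 b)
    (hDpos : HypDpos D) (hD1 : HypD1 D) (hD2 : HypD2 D c α)
    (hμpos : ∀ n, 0 < μseq n) (hμ0 : Tendsto μseq atTop (nhds 0))
    (hsol : ∀ n, IsGlobalSolution a (μseq n) b D h0 hd0 0 0 (h n) (ξ n))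
    (hconvh : ∀ K : Set ℝ, IsCompact K → K ⊆ Set.Ici 0 →
      TendstoUniformlyOn (fun n t => h n t) hl atTop K)
    (hconvξ : ∀ K : Set ℝ, IsCompact K → K ⊆ Set.Ici 0 →
      TendstoUniformlyOn (fun n t => ξ n t) ξl atTop K) :
    ∀ t : ℝ, 0 ≤ t → hl t = h0 + hd0 * t ∧ ξl t = 0 :=
  limit_identification_nonneg_velocity_general a h0 hd0 b D μseq h ξ hl ξl hh0 hhd0 hb0 hB1 hD1 hμ0
    hsol hconvh hconvξ
end
end

section
/- Hit-and-stick for the rigid shell spring-mass model (Corollary 1.1): Let k, M, m > 0, set b(ξ) := (k/M)·ξ and a := M/m, and let 𝒟(h,ξ) = g(h)·h^(−α) for a locally Lipschitz g : (0,∞) → [C₁, C₂] with 0 < C₁ ≤ C₂ and α ∈ [1,∞). Take initial data ξ₀ = ξ̇₀ = 0, h₀ > 0, ḣ₀ < 0, set t₀ := −h₀/ḣ₀, and for μ > 0 let (h_μ, ξ_μ) denote the unique global solution of (gf). Then, as μ → 0⁺, h_μ converges uniformly on compact subsets of [0,∞) to the monotone function H(t) := max{0, h₀ + ḣ₀·t};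 that is, in the vanishing viscosity limit the shell falls freely to the wall and remains at the wall for all later times. -/
/-!
Two balance laws drive the argument. The energy `M ḣ²/2 + m (ḣ - ξ̇)²/2 + k ξ²/2` is dissipated,
and the momentum `(M + m) ḣ - m ξ̇` changes only by `-μ M G(h)`, where `G` is a primitive of the
drag `g(h) h^(-α)`. While `h` stays above a level `ρ`, the drag is bounded, so the spring is
forced only at order `μ` and momentum balance keeps `h` within `O(μ)` of the free fall
`h₀ + ḣ₀ t`. Once `h` has come down to `ρ` it never climbs back to `2ρ`: at such a crossing the
fluid has absorbed only `μ M G(2ρ) = O(μ)` momentum, and an upward velocity would then force the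
inner mass to carry more kinetic energy than the system ever had.
-/

open Real Filter Set MeasureTheory Metric

noncomputable section

section Calculus

variable {f f' : ℝ → ℝ} {a b : ℝ}

lemma le_add_mul_sub_of_hasDerivAt_le {C : ℝ} (hab : a ≤ b)
    (hf : ∀ x ∈ Icc a b, HasDerivAt f (f' x) x) (hC : ∀ x ∈ Ico a b, f' x ≤ C) :
    f b ≤ f a + C * (b - a) := by
  refine image_le_of_deriv_right_le_deriv_boundary (B := fun x => f a + C * (x - a))
    (fun x hx => (hf x hx).continuousAt.continuousWithinAt)
    (fun x hx => (hf x (Ico_subset_Icc_self hx)).hasDerivWithinAt) (by simp)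
    (by fun_prop) (fun x _ => ?_) hC (right_mem_Icc.2 hab)
  simpa using ((hasDerivAt_id x).sub_const a).const_mul C |>.const_add (f a) |>.hasDerivWithinAt

lemma abs_sub_sub_mul_le_of_abs_deriv_sub_le {c C : ℝ} (hab : a ≤ b)
    (hf : ∀ x ∈ Icc a b, HasDerivAt f (f' x) x) (hC : ∀ x ∈ Ico a b, |f' x - c| ≤ C) :
    |f b - f a - c * (b - a)| ≤ C * (b - a) := by
  have := norm_image_sub_le_of_norm_deriv_le_segment' (f := fun x => f x - c * x)
    (fun x hx => ((hf x hx).sub ((hasDerivAt_id x).const_mul c)).hasDerivWithinAt)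
    (by simpa using hC) b (right_mem_Icc.2 hab)
  rw [Real.norm_eq_abs] at this
  convert this using 2
  ring

lemma sqrt_add_le_of_deriv_le_mul_sqrt {δ c : ℝ} (hab : a ≤ b) (hδ : 0 < δ)
    (hf : ∀ x ∈ Icc a b, HasDerivAt f (f' x) x) (hf0 : ∀ x ∈ Icc a b, 0 ≤ f x)
    (hC : ∀ x ∈ Ico a b, f' x ≤ 2 * c * √(f x + δ)) :
    √(f b + δ) ≤ √(f a + δ) + c * (b - a) := by
  have hpos : ∀ x ∈ Icc a b, 0 < f x + δ := fun x hx => by linarith [hf0 x hx]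
  refine le_add_mul_sub_of_hasDerivAt_le hab
    (fun x hx => ((hf x hx).add_const δ).sqrt (hpos x hx).ne') (fun x hx => ?_)
  have hsqrt : 0 < √(f x + δ) := Real.sqrt_pos.2 (hpos x (Ico_subset_Icc_self hx))
  rw [div_le_iff₀ (by positivity)]
  linarith [hC x hx]

lemma exists_first_eq_of_lt_of_le {c : ℝ} (hab : a ≤ b) (hf : ContinuousOn f (Icc a b))
    (ha : c < f a) (hb : f b ≤ c) :
    ∃ τ ∈ Icc a b, f τ = c ∧ ∀ x ∈ Icc a τ, c ≤ f x := by
  set S := Icc a b ∩ f ⁻¹' Iic c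
  have hS : IsClosed S := hf.preimage_isClosed_of_isClosed isClosed_Icc isClosed_Iic
  have hSne : S.Nonempty := ⟨b, right_mem_Icc.2 hab, hb⟩
  have hSbdd : BddBelow S := ⟨a, fun x hx => hx.1.1⟩
  obtain ⟨⟨haτ, hτb⟩, hτc⟩ := hS.csInf_mem hSne hSbdd
  have hmin : ∀ x ∈ Icc a b, f x ≤ c → sInf S ≤ x := fun x hx hxc => csInf_le hSbdd ⟨hx, hxc⟩
  obtain ⟨τ, ⟨haτ', hττ⟩, hfτ⟩ :=
    intermediate_value_Icc' haτ (hf.mono (Icc_subset_Icc_right hτb)) ⟨hτc, ha.le⟩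
  obtain rfl : τ = sInf S := le_antisymm hττ (hmin τ ⟨haτ', hττ.trans hτb⟩ hfτ.le)
  refine ⟨_, ⟨haτ, hτb⟩, hfτ, fun x hx => not_lt.1 fun hxc => ?_⟩
  obtain rfl : x = sInf S := le_antisymm hx.2 (hmin x ⟨hx.1, hx.2.trans hτb⟩ hxc.le)
  exact hxc.ne hfτ

end Calculus

/-- `μ M` times it is the momentum the fluid has absorbed once the shell has moved from `h₀`
to `x`. -/
def dragPotential (g : ℝ → ℝ) (α h0 x : ℝ) : ℝ := ∫ y in h0..x, g y * y ^ (-α)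

namespace HypD3

variable {D : ℝ → ℝ → ℝ} {g : ℝ → ℝ} {C₁ C₂ α : ℝ}

lemma kernel_pos (hD3 : HypD3 D g C₁ C₂ α) {x : ℝ} (hx : 0 < x) : 0 < g x * x ^ (-α) :=
  mul_pos (hD3.1.trans_le (hD3.2.2.2.2.1 x hx).1) (rpow_pos_of_pos hx _)

lemma hypDpos (hD3 : HypD3 D g C₁ C₂ α) : HypDpos D := fun x ξ hx => by
  rw [hD3.2.2.2.2.2 x ξ hx]
  exact hD3.kernel_pos hx

lemma continuousAt_kernel (hD3 : HypD3 D g C₁ C₂ α) {x : ℝ} (hx : 0 < x) :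
    ContinuousAt (fun y => g y * y ^ (-α)) x := by
  obtain ⟨ε, hε, L, hL⟩ := hD3.2.2.2.1 x hx
  have hg : ContinuousAt g x :=
    hL.continuousOn.continuousAt (inter_mem (ball_mem_nhds x hε) (Ioi_mem_nhds hx))
  exact hg.mul (continuousAt_rpow_const x _ (Or.inl hx.ne'))

lemma kernel_le (hD3 : HypD3 D g C₁ C₂ α) {ρ y : ℝ} (hρ : 0 < ρ) (hy : ρ ≤ y) :
    g y * y ^ (-α) ≤ C₂ * ρ ^ (-α) :=
  mul_le_mul (hD3.2.2.2.2.1 y (hρ.trans_le hy)).2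
    (rpow_le_rpow_of_nonpos hρ hy (by linarith [hD3.2.2.1]))
    (rpow_pos_of_pos (hρ.trans_le hy) _).le (hD3.1.le.trans hD3.2.1)

lemma drag_le (hD3 : HypD3 D g C₁ C₂ α) {ρ x : ℝ} (hρ : 0 < ρ) (hx : ρ ≤ x) (ξ : ℝ) :
    D x ξ ≤ C₂ * ρ ^ (-α) := by
  rw [hD3.2.2.2.2.2 x ξ (hρ.trans_le hx)]
  exact hD3.kernel_le hρ hx

lemma hasDerivAt_dragPotential (hD3 : HypD3 D g C₁ C₂ α) {h0 x : ℝ} (hh0 : 0 < h0)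
    (hx : 0 < x) : HasDerivAt (dragPotential g α h0) (g x * x ^ (-α)) x := by
  have hcont : ContinuousOn (fun y => g y * y ^ (-α)) (Ioi 0) :=
    fun y hy => (hD3.continuousAt_kernel hy).continuousWithinAt
  refine intervalIntegral.integral_hasDerivAt_right ?_
    (hcont.stronglyMeasurableAtFilter isOpen_Ioi x hx) (hD3.continuousAt_kernel hx)
  refine (hcont.mono fun y hy => ?_).intervalIntegrable
  exact (lt_min hh0 hx).trans_le hy.1

lemma abs_dragPotential_le (hD3 : HypD3 D g C₁ C₂ α) {h0 ρ x : ℝ} (hρ : 0 < ρ) (hρh0 : ρ ≤ h0)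
    (hρx : ρ ≤ x) : |dragPotential g α h0 x| ≤ C₂ * ρ ^ (-α) * |x - h0| := by
  refine intervalIntegral.norm_integral_le_of_norm_le_const (f := fun y => g y * y ^ (-α))
    fun y hy => ?_
  have hy : ρ ≤ y := (le_min hρh0 hρx).trans hy.1.le
  rw [Real.norm_eq_abs, abs_of_pos (hD3.kernel_pos (hρ.trans_le hy))]
  exact hD3.kernel_le hρ hy

end HypD3

/-- The physical energy of (gf): the inner mass moves with velocity `ḣ - ξ̇`. -/
def shellEnergy (M m k : ℝ) (h ξ : ℝ → ℝ) (t : ℝ) : ℝ :=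
  M / 2 * deriv h t ^ 2 + m / 2 * (deriv h t - deriv ξ t) ^ 2 + k / 2 * ξ t ^ 2

namespace IsGlobalSolution

variable {k M m μ h0 hd0 C₁ C₂ α t : ℝ} {D : ℝ → ℝ → ℝ} {g h ξ : ℝ → ℝ}
  (sol : IsGlobalSolution (M / m) μ (fun y => k / M * y) D h0 hd0 0 0 h ξ)
include sol

lemma hasDerivAt_h (ht : 0 ≤ t) : HasDerivAt h (deriv h t) t := (sol.2.1 t ht).1.hasDerivAt

lemma hasDerivAt_deriv_h (ht : 0 ≤ t) : HasDerivAt (deriv h) (deriv (deriv h) t) t :=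
  (sol.2.1 t ht).2.1.hasDerivAt

lemma hasDerivAt_ξ (ht : 0 ≤ t) : HasDerivAt ξ (deriv ξ t) t := (sol.2.1 t ht).2.2.1.hasDerivAt

lemma hasDerivAt_deriv_ξ (ht : 0 ≤ t) : HasDerivAt (deriv ξ) (deriv (deriv ξ) t) t :=
  (sol.2.1 t ht).2.2.2.hasDerivAt

lemma continuousOn_h : ContinuousOn h (Ici 0) :=
  fun _ ht => (sol.hasDerivAt_h ht).continuousAt.continuousWithinAt

lemma mass_eq (hM : M ≠ 0) (ht : 0 ≤ t) :
    M * deriv (deriv h) t = -(k * ξ t) - μ * M * D (h t) (ξ t) * deriv h t := by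
  rw [sol.2.2.2.1 t ht]
  field_simp

lemma spring_eq (hM : M ≠ 0) (hm : m ≠ 0) (ht : 0 ≤ t) :
    m * (deriv (deriv h) t - deriv (deriv ξ) t) = k * ξ t := by
  rw [sol.2.2.1 t ht]
  field_simp

lemma hasDerivAt_shellEnergy (hM : M ≠ 0) (hm : m ≠ 0) (ht : 0 ≤ t) :
    HasDerivAt (shellEnergy M m k h ξ) (-(μ * M * D (h t) (ξ t) * deriv h t ^ 2)) t := by
  have hw := (sol.hasDerivAt_deriv_h ht).fun_sub (sol.hasDerivAt_deriv_ξ ht)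
  refine (((sol.hasDerivAt_deriv_h ht).fun_pow 2).const_mul (M / 2)).fun_add
    ((hw.fun_pow 2).const_mul (m / 2)) |>.fun_add
    (((sol.hasDerivAt_ξ ht).fun_pow 2).const_mul (k / 2)) |>.congr_deriv ?_
  linear_combination deriv h t * sol.mass_eq hM ht
    + (deriv h t - deriv ξ t) * sol.spring_eq hM hm ht

lemma shellEnergy_le (hM : 0 < M) (hm : m ≠ 0) (hμ : 0 ≤ μ) (hD : HypDpos D) (ht : 0 ≤ t) :
    shellEnergy M m k h ξ t ≤ (M + m) / 2 * hd0 ^ 2 := by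
  have hdiss := le_add_mul_sub_of_hasDerivAt_le (C := 0) ht
    (fun s hs => sol.hasDerivAt_shellEnergy hM.ne' hm hs.1) fun s hs => by
      have := hD (h s) (ξ s) (sol.1 s hs.1)
      have : 0 ≤ μ * M * D (h s) (ξ s) * deriv h s ^ 2 := by positivity
      linarith
  obtain ⟨-, hhd0, hξ0, hξd0⟩ := sol.2.2.2.2
  simp only [shellEnergy, hhd0, hξ0, hξd0] at hdiss ⊢
  linarith

lemma abs_deriv_h_le (hk : 0 ≤ k) (hM : 0 < M) (hm : 0 < m) (hμ : 0 ≤ μ) (hD : HypDpos D)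
    (ht : 0 ≤ t) : |deriv h t| ≤ (M + m) / M * |hd0| := by
  have hE := sol.shellEnergy_le hM hm.ne' hμ hD ht
  unfold shellEnergy at hE
  have hratio : 1 ≤ (M + m) / M := by rw [le_div_iff₀ hM]; linarith
  refine abs_le_of_sq_le_sq ?_ (by positivity)
  calc deriv h t ^ 2 ≤ (M + m) / M * hd0 ^ 2 := by
        rw [div_mul_eq_mul_div, le_div_iff₀ hM]
        nlinarith [sq_nonneg (deriv h t - deriv ξ t), sq_nonneg (ξ t)]
    _ ≤ (M + m) / M * ((M + m) / M * hd0 ^ 2) := le_mul_of_one_le_left (by positivity) hratio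
    _ = ((M + m) / M * |hd0|) ^ 2 := by rw [mul_pow, sq_abs]; ring

lemma deriv_deriv_ξ_eq (hM : M ≠ 0) (hm : m ≠ 0) (ht : 0 ≤ t) :
    deriv (deriv ξ) t = -(k / M + k / m) * ξ t - μ * D (h t) (ξ t) * deriv h t := by
  have hmass := sol.mass_eq hM ht
  have hspring := sol.spring_eq hM hm ht
  field_simp
  linear_combination m * hmass - M * hspring

lemma momentum_eq (hM : M ≠ 0) (hm : m ≠ 0) (hD3 : HypD3 D g C₁ C₂ α) (hh0 : 0 < h0)
    (ht : 0 ≤ t) :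
    (M + m) * deriv h t - m * deriv ξ t + μ * M * dragPotential g α h0 (h t) = (M + m) * hd0 := by
  set P := fun s => (M + m) * deriv h s - m * deriv ξ s + μ * M * dragPotential g α h0 (h s)
  have hP : ∀ s, 0 ≤ s → HasDerivAt P 0 s := fun s hs => by
    have hpos := sol.1 s hs
    have hG := (hD3.hasDerivAt_dragPotential hh0 hpos).comp s (sol.hasDerivAt_h hs)
    refine (((sol.hasDerivAt_deriv_h hs).const_mul (M + m)).fun_sub
      ((sol.hasDerivAt_deriv_ξ hs).const_mul m)).fun_add (hG.const_mul (μ * M)) |>.congr_deriv ?_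
    linear_combination sol.mass_eq hM hs + sol.spring_eq hM hm hs
      - μ * M * deriv h s * hD3.2.2.2.2.2 (h s) (ξ s) hpos
  have hconst := constant_of_has_deriv_right_zero (f := P) (a := 0) (b := t)
    (fun s hs => (hP s hs.1).continuousAt.continuousWithinAt)
    (fun s hs => (hP s hs.1).hasDerivWithinAt) t ⟨ht, le_rfl⟩
  obtain ⟨hh0', hhd0, -, hξd0⟩ := sol.2.2.2.2
  simpa [P, dragPotential, hh0', hhd0, hξd0] using hconst

lemma abs_deriv_ξ_le (hk : 0 ≤ k) (hM : 0 < M) (hm : 0 < m) (hμ : 0 < μ)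
    (hD3 : HypD3 D g C₁ C₂ α) {ρ : ℝ} (hρ : 0 < ρ) (ht : 0 ≤ t)
    (hρh : ∀ s ∈ Icc 0 t, ρ ≤ h s) :
    |deriv ξ t| ≤ μ * (1 + C₂ * ρ ^ (-α) * ((M + m) / M * |hd0|) * t) := by
  set Ω2 := k / M + k / m
  set V := (M + m) / M * |hd0|
  set Db := C₂ * ρ ^ (-α)
  -- `ξ` is an oscillator of frequency `√Ω2` forced by `-μ D ḣ`; the `μ²` under the square root
  -- keeps it differentiable and is exactly its initial value.
  set e := fun s => deriv ξ s ^ 2 + Ω2 * ξ s ^ 2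
  have he0 : ∀ s, 0 ≤ e s := fun s => by positivity
  have hξe : ∀ s, |deriv ξ s| ≤ √(e s + μ ^ 2) := fun s => by
    have : 0 ≤ Ω2 * ξ s ^ 2 := by positivity
    exact Real.abs_le_sqrt (by simp only [e]; linarith [sq_nonneg μ])
  have he : ∀ s ∈ Icc 0 t,
      HasDerivAt e (-(2 * μ * D (h s) (ξ s) * deriv h s * deriv ξ s)) s := fun s hs => by
    refine ((sol.hasDerivAt_deriv_ξ hs.1).fun_pow 2).fun_add
      (((sol.hasDerivAt_ξ hs.1).fun_pow 2).const_mul Ω2) |>.congr_deriv ?_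
    rw [sol.deriv_deriv_ξ_eq hM.ne' hm.ne' hs.1]
    ring
  have hbound : ∀ s ∈ Ico 0 t,
      -(2 * μ * D (h s) (ξ s) * deriv h s * deriv ξ s) ≤ 2 * (μ * (Db * V)) * √(e s + μ ^ 2) :=
    fun s hs => by
      have hD0 := hD3.hypDpos (h s) (ξ s) (sol.1 s hs.1)
      have hDle := hD3.drag_le hρ (hρh s (Ico_subset_Icc_self hs)) (ξ s)
      have hV := sol.abs_deriv_h_le hk hM hm hμ.le hD3.hypDpos hs.1
      calc -(2 * μ * D (h s) (ξ s) * deriv h s * deriv ξ s)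
          = 2 * μ * D (h s) (ξ s) * -(deriv h s * deriv ξ s) := by ring
        _ ≤ 2 * μ * D (h s) (ξ s) * (|deriv h s| * |deriv ξ s|) := by
            rw [← abs_mul]
            exact mul_le_mul_of_nonneg_left (neg_le_abs _) (by positivity)
        _ ≤ 2 * μ * Db * (V * √(e s + μ ^ 2)) := by
            have : 0 ≤ Db := hD0.le.trans hDle
            gcongr
            exact hξe s
        _ = 2 * (μ * (Db * V)) * √(e s + μ ^ 2) := by ring
  have hgrowth := sqrt_add_le_of_deriv_le_mul_sqrt ht (by positivity) he
    (fun s _ => he0 s) hbound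
  have he00 : e 0 = 0 := by simp [e, sol.2.2.2.2.2.2]
  rw [he00, zero_add, Real.sqrt_sq hμ.le] at hgrowth
  calc |deriv ξ t| ≤ √(e t + μ ^ 2) := hξe t
    _ ≤ μ + μ * (Db * V) * (t - 0) := hgrowth
    _ = μ * (1 + Db * V * t) := by ring

lemma abs_sub_freeFall_le (hk : 0 ≤ k) (hM : 0 < M) (hm : 0 < m) (hμ : 0 < μ)
    (hD3 : HypD3 D g C₁ C₂ α) (hh0 : 0 < h0) {ρ : ℝ} (hρ : 0 < ρ) (hρh0 : ρ ≤ h0) (ht : 0 ≤ t)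
    (hρh : ∀ s ∈ Icc 0 t, ρ ≤ h s) :
    |h t - (h0 + hd0 * t)| ≤ μ * (1 + C₂ * ρ ^ (-α) * ((M + m) / M * |hd0|) * t) * t := by
  set V := (M + m) / M * |hd0|
  set Db := C₂ * ρ ^ (-α)
  have hV : ∀ s, 0 ≤ s → |deriv h s| ≤ V := fun s hs =>
    sol.abs_deriv_h_le hk hM hm hμ.le hD3.hypDpos hs
  have hDb : 0 ≤ Db := mul_nonneg (hD3.1.trans_le hD3.2.1).le (rpow_pos_of_pos hρ _).le
  have hh0' : h 0 = h0 := sol.2.2.2.2.1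
  have hslow : ∀ s ∈ Ico 0 t, |deriv h s - hd0| ≤ μ * (1 + Db * V * t) := by
    intro s hs
    have hdisp : |h s - h0| ≤ V * s := by
      have := abs_sub_sub_mul_le_of_abs_deriv_sub_le (c := 0) hs.1
        (fun x hx => sol.hasDerivAt_h hx.1) (fun x hx => by simpa using hV x hx.1)
      simpa [hh0'] using this
    have hG : |dragPotential g α h0 (h s)| ≤ Db * V * t :=
      calc |dragPotential g α h0 (h s)| ≤ Db * |h s - h0| :=
            hD3.abs_dragPotential_le hρ hρh0 (hρh s (Ico_subset_Icc_self hs))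
        _ ≤ Db * (V * t) := by gcongr; exact hdisp.trans (by gcongr; exact hs.2.le)
        _ = Db * V * t := by ring
    have hξ : |deriv ξ s| ≤ μ * (1 + Db * V * t) :=
      (sol.abs_deriv_ξ_le hk hM hm hμ hD3 hρ hs.1
        fun u hu => hρh u ⟨hu.1, hu.2.trans hs.2.le⟩).trans (by gcongr; exact hs.2.le)
    have hmom : (M + m) * (deriv h s - hd0)
        = m * deriv ξ s - μ * M * dragPotential g α h0 (h s) := by
      linear_combination sol.momentum_eq hM.ne' hm.ne' hD3 hh0 hs.1
    refine le_of_mul_le_mul_left ?_ (add_pos hM hm)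
    calc (M + m) * |deriv h s - hd0| = |m * deriv ξ s - μ * M * dragPotential g α h0 (h s)| := by
          rw [← hmom, abs_mul, abs_of_pos (add_pos hM hm)]
      _ ≤ m * |deriv ξ s| + μ * M * |dragPotential g α h0 (h s)| := by
          refine (abs_sub _ _).trans_eq ?_
          rw [abs_mul, abs_mul, abs_of_pos hm, abs_of_pos (mul_pos hμ hM)]
      _ ≤ m * (μ * (1 + Db * V * t)) + μ * M * (1 + Db * V * t) := by gcongr; linarith
      _ = (M + m) * (μ * (1 + Db * V * t)) := by ring
  have := abs_sub_sub_mul_le_of_abs_deriv_sub_le ht (fun x hx => sol.hasDerivAt_h hx.1) hslow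
  rw [hh0', sub_zero, sub_sub] at this
  exact this

/-- If the shell moved upwards while the fluid has absorbed less than `M |ḣ₀| / 2` of momentum,
the inner mass would carry momentum at least `(m + M/2) |ḣ₀|`, hence more kinetic energy than
the initial `(M + m) ḣ₀² / 2`. -/
lemma deriv_h_neg (hk : 0 ≤ k) (hM : 0 < M) (hm : 0 < m) (hμ : 0 ≤ μ)
    (hD3 : HypD3 D g C₁ C₂ α) (hh0 : 0 < h0) (ht : 0 ≤ t)
    (hsmall : 2 * μ * |dragPotential g α h0 (h t)| < -hd0) : deriv h t < 0 := by
  by_contra! hup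
  have hmom := sol.momentum_eq hM.ne' hm.ne' hD3 hh0 ht
  have hE := sol.shellEnergy_le hM hm.ne' hμ hD3.hypDpos ht
  unfold shellEnergy at hE
  set u := deriv h t
  set w := deriv h t - deriv ξ t
  set G := dragPotential g α h0 (h t)
  have hdrag : M * hd0 < 2 * μ * M * G := by
    nlinarith [neg_abs_le G, mul_nonneg hμ hM.le]
  have hinner : m * w < (m + M / 2) * hd0 := by nlinarith
  have hhd0 : hd0 < 0 := by nlinarith [abs_nonneg G]
  have hinner_sq : (m + M / 2) ^ 2 * hd0 ^ 2 < (m * w) ^ 2 := by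
    have := pow_lt_pow_left₀ (neg_lt_neg hinner) (by nlinarith) two_ne_zero
    linear_combination this
  have henergy : m * w ^ 2 ≤ (M + m) * hd0 ^ 2 := by nlinarith [sq_nonneg (ξ t), sq_nonneg u]
  nlinarith [sq_nonneg hd0, sq_nonneg M]

lemma abs_sub_max_le (hk : 0 ≤ k) (hM : 0 < M) (hm : 0 < m) (hμ : 0 < μ)
    (hD3 : HypD3 D g C₁ C₂ α) (hh0 : 0 < h0) (hhd0 : hd0 < 0) {ρ T : ℝ} (hρ : 0 < ρ)
    (hρh0 : ρ < h0) (ht : t ∈ Icc 0 T)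
    (hfall : μ * ((1 + C₂ * ρ ^ (-α) * ((M + m) / M * |hd0|) * T) * T) < ρ / 2)
    (hstick : μ * (2 * |dragPotential g α h0 (2 * ρ)|) < -hd0) :
    |h t - max 0 (h0 + hd0 * t)| ≤ 2 * ρ := by
  set c := C₂ * ρ ^ (-α) * ((M + m) / M * |hd0|)
  have hc : 0 ≤ c := mul_nonneg (mul_nonneg (hD3.1.trans_le hD3.2.1).le (rpow_pos_of_pos hρ _).le)
    (by positivity)
  have hfree : ∀ s ∈ Icc 0 T, (∀ u ∈ Icc 0 s, ρ ≤ h u) → |h s - (h0 + hd0 * s)| < ρ / 2 := by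
    intro s ⟨hs0, hsT⟩ hρs
    refine (sol.abs_sub_freeFall_le hk hM hm hμ hD3 hh0 hρ hρh0.le hs0 hρs).trans_lt
      (lt_of_le_of_lt ?_ hfall)
    have hT : 0 ≤ T := hs0.trans hsT
    rw [mul_assoc]
    gcongr
  by_cases hfar : ∀ u ∈ Icc 0 t, ρ ≤ h u
  · have hfall_t := abs_lt.1 (hfree t ht hfar)
    have hρt := hfar t ⟨ht.1, le_rfl⟩
    rw [max_eq_right (by linarith), abs_le]
    constructor <;> linarith
  push Not at hfar
  obtain ⟨s, hs, hsρ⟩ := hfar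
  obtain ⟨τ, hτ, hτρ, hρτ⟩ := exists_first_eq_of_lt_of_le hs.1
    (sol.continuousOn_h.mono fun x hx => hx.1) (by rwa [sol.2.2.2.2.1]) hsρ.le
  have hτt : τ ≤ t := hτ.2.trans hs.2
  have hfall_τ := abs_lt.1 (hfree τ ⟨hτ.1, hτt.trans ht.2⟩ hρτ)
  have hline : h0 + hd0 * t ≤ h0 + hd0 * τ := by nlinarith
  have hstuck : h t ≤ 2 * ρ :=
    image_le_of_deriv_right_lt_deriv_boundary' (B := fun _ => 2 * ρ) (B' := 0)
      (sol.continuousOn_h.mono fun x hx => hτ.1.trans hx.1)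
      (fun x hx => (sol.hasDerivAt_h (hτ.1.trans hx.1)).hasDerivWithinAt) (by linarith)
      continuousOn_const (fun x _ => hasDerivWithinAt_const x _ _)
      (fun x hx hx2 => sol.deriv_h_neg hk hM hm hμ.le hD3 hh0 (hτ.1.trans hx.1)
        (by rw [hx2]; linarith)) ⟨hτt, le_rfl⟩
  have hmax : max 0 (h0 + hd0 * t) ≤ 3 * ρ / 2 := max_le (by linarith) (by linarith)
  have := sol.1 t ht.1
  rw [abs_le]
  constructor <;> linarith [le_max_left 0 (h0 + hd0 * t)]

end IsGlobalSolution

lemma eventually_nhdsGT_zero_mul_lt (A : ℝ) {B : ℝ} (hB : 0 < B) :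
    ∀ᶠ μ in nhdsWithin (0 : ℝ) (Ioi 0), μ * A < B := by
  have : Tendsto (fun μ : ℝ => μ * A) (nhds 0) (nhds 0) := by
    simpa using (continuous_mul_const A).tendsto 0
  exact (this.eventually (gt_mem_nhds hB)).filter_mono nhdsWithin_le_nhds

/-- Corollary 1.1: hit-and-stick for the rigid shell spring-mass model:
with `b(ξ) = (k/M)ξ`, `a = M/m` and a rigid drag `𝒟(h,ξ) = g(h)h^(−α)`,
as `μ → 0⁺` the distance `h_μ` converges uniformly on compact subsets of
`[0,∞)` to the monotone function `H(t) = max{0, h₀ + ḣ₀ t}`: the shell falls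
freely to the wall and sticks to it for all later times. -/
theorem hit_and_stick_rigid_shell
    (k M m h0 hd0 C₁ C₂ α : ℝ) (g : ℝ → ℝ) (D : ℝ → ℝ → ℝ)
    (h ξ : ℝ → ℝ → ℝ)
    (hk : 0 < k) (hM : 0 < M) (hm : 0 < m)
    (hh0 : 0 < h0) (hhd0 : hd0 < 0)
    (hD3 : HypD3 D g C₁ C₂ α)
    (hsol : ∀ μ : ℝ, 0 < μ →
      IsGlobalSolution (M / m) μ (fun y => (k / M) * y) D h0 hd0 0 0
        (h μ) (ξ μ)) :
    ∀ K : Set ℝ, IsCompact K → K ⊆ Set.Ici 0 →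
      TendstoUniformlyOn (fun μ t => h μ t) (fun t => max 0 (h0 + hd0 * t))
        (nhdsWithin 0 (Set.Ioi 0)) K := by
  intro K hK hK0
  obtain ⟨T, hT⟩ := hK.bddAbove
  rw [Metric.tendstoUniformlyOn_iff]
  intro ε hε
  set ρ := min (h0 / 2) (ε / 3)
  have hρ : 0 < ρ := lt_min (by linarith) (by linarith)
  have hρh0 : ρ < h0 := (min_le_left _ _).trans_lt (by linarith)
  filter_upwards [self_mem_nhdsWithin, eventually_nhdsGT_zero_mul_lt _ (half_pos hρ),
    eventually_nhdsGT_zero_mul_lt _ (neg_pos.2 hhd0)] with μ hμ hfall hstick t htK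
  rw [dist_comm, Real.dist_eq]
  calc |h μ t - max 0 (h0 + hd0 * t)| ≤ 2 * ρ :=
        (hsol μ hμ).abs_sub_max_le hk.le hM hm hμ hD3 hh0 hhd0 hρ hρh0 ⟨hK0 htK, hT htK⟩
          hfall hstick
    _ < ε := by linarith [min_le_right (h0 / 2) (ε / 3)]
end
end

section
/- No rebound for a rigid body (Corollary 2.6): Let m, μ > 0, let D : (0,∞) → (0,∞) be locally Lipschitz continuous, and let h : [0,∞) → ℝ be twice differentiable with h(0) = h₀ > 0, ḣ(0) = ḣ₀ < 0, satisfying m·ḧ(t) = −μ·D(h(t))·ḣ(t) and h(t) > 0 for every t > 0. Then h is a monotone function on [0,∞). -/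
open Real Filter Set MeasureTheory Metric

noncomputable section

/-!
With `φ = (μ / m)·D(h)` the equation reads `ḣ' = -φ ḣ`, a linear equation for the velocity,
and `φ` is continuous because `D` is locally Lipschitz and `h > 0`. Hence
`ḣ(t) = ḣ(0)·exp(-∫₀ᵗ φ)`: the velocity never changes sign, so `h` is monotone.
-/

theorem locallyLipschitzOn_of_lipschitzOnWith_ball_inter {α β : Type*} [PseudoMetricSpace α]
    [PseudoEMetricSpace β] {s : Set α} {f : α → β}
    (hf : ∀ x ∈ s, ∃ ε > 0, ∃ L : NNReal, LipschitzOnWith L f (ball x ε ∩ s)) :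
    LocallyLipschitzOn s f := by
  intro x hx
  obtain ⟨ε, hε, L, hL⟩ := hf x hx
  exact ⟨L, _, inter_mem (mem_nhdsWithin_of_mem_nhds (ball_mem_nhds x hε)) self_mem_nhdsWithin,
    hL⟩

theorem eq_mul_exp_neg_integral_of_hasDerivAt_eq_neg_mul {v φ : ℝ → ℝ} {a : ℝ}
    (hφ : ContinuousOn φ (Ici a)) (hv : ∀ t ∈ Ici a, HasDerivAt v (-φ t * v t) t) :
    ∀ t ∈ Ici a, v t = v a * exp (-∫ s in a..t, φ s) := by
  set F : ℝ → ℝ := fun t => ∫ s in a..t, φ s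
  have hsub : ∀ t ∈ Ici a, uIcc a t ⊆ Ici a := fun t ht =>
    (uIcc_of_le ht).subset.trans Icc_subset_Ici_self
  have hF : ∀ t ∈ Ici a, HasDerivWithinAt F (φ t) (Ici t) t := fun t ht =>
    intervalIntegral.integral_hasDerivWithinAt_right (hφ.mono (hsub t ht)).intervalIntegrable
      ((hφ.stronglyMeasurableAtFilter_nhdsWithin measurableSet_Ici t).filter_mono
        (nhdsWithin_mono t (Ioi_subset_Ici ht)))
      ((hφ t ht).mono (Ioi_subset_Ici ht))
  have hconst : ∀ t ∈ Ici a, v t * exp (F t) = v a * exp (F a) := by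
    intro t ht
    refine constant_of_has_deriv_right_zero (f := fun t => v t * exp (F t)) ?_ ?_ t ⟨ht, le_rfl⟩
    · have hFc : ContinuousOn F (Icc a t) := by
        simpa only [uIcc_of_le (show a ≤ t from ht)] using
          intervalIntegral.continuousOn_primitive_interval
            ((hφ.mono (hsub t ht)).integrableOn_compact isCompact_uIcc)
      have hvc : ContinuousOn v (Icc a t) := fun s hs =>
        (hv s hs.1).continuousAt.continuousWithinAt
      exact hvc.mul hFc.rexp
    · intro s hs
      exact ((hv s hs.1).hasDerivWithinAt.mul (hF s hs.1).exp).congr_deriv (by ring)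
  intro t ht
  have hFa : F a = 0 := intervalIntegral.integral_same
  rw [hFa, exp_zero, mul_one] at hconst
  rw [← hconst t ht, exp_neg, mul_inv_cancel_right₀ (exp_pos _).ne']

theorem monotoneOn_or_antitoneOn_Ici_of_deriv_sign {f : ℝ → ℝ} {a : ℝ}
    (hf : ∀ t ∈ Ici a, DifferentiableAt ℝ f t)
    (hsign : (∀ t ∈ Ici a, 0 ≤ deriv f t) ∨ ∀ t ∈ Ici a, deriv f t ≤ 0) :
    MonotoneOn f (Ici a) ∨ AntitoneOn f (Ici a) := by
  have hcont : ContinuousOn f (Ici a) := fun t ht => (hf t ht).continuousAt.continuousWithinAt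
  have hdiff : DifferentiableOn ℝ f (interior (Ici a)) := fun t ht =>
    (hf t (interior_subset ht)).differentiableWithinAt
  refine hsign.imp (fun h => ?_) (fun h => ?_)
  · exact monotoneOn_of_deriv_nonneg (convex_Ici a) hcont hdiff
      fun t ht => h t (interior_subset ht)
  · exact antitoneOn_of_deriv_nonpos (convex_Ici a) hcont hdiff
      fun t ht => h t (interior_subset ht)

theorem no_rebound_rigid_body_general
    (m μ h0 : ℝ) (D : ℝ → ℝ) (h : ℝ → ℝ)
    (hm : 0 < m) (hh0 : 0 < h0)
    (hDlip : ∀ x : ℝ, 0 < x → ∃ ε > 0, ∃ L : NNReal,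
      LipschitzOnWith L D (Metric.ball x ε ∩ Set.Ioi 0))
    (hdiff : ∀ t : ℝ, 0 ≤ t →
      DifferentiableAt ℝ h t ∧ DifferentiableAt ℝ (deriv h) t)
    (hode : ∀ t : ℝ, 0 ≤ t →
      m * deriv (deriv h) t = - μ * D (h t) * deriv h t)
    (hinit : h 0 = h0)
    (hpos : ∀ t : ℝ, 0 < t → 0 < h t) :
    MonotoneOn h (Set.Ici 0) ∨ AntitoneOn h (Set.Ici 0) := by
  have hmaps : MapsTo h (Ici 0) (Ioi 0) := by
    intro t ht
    rcases (show (0 : ℝ) ≤ t from ht).eq_or_lt with ht | ht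
    · exact ht ▸ hinit ▸ hh0
    · exact hpos t ht
  have hD : ContinuousOn D (Ioi 0) :=
    (locallyLipschitzOn_of_lipschitzOnWith_ball_inter hDlip).continuousOn
  have hhc : ContinuousOn h (Ici 0) := fun t ht =>
    (hdiff t ht).1.continuousAt.continuousWithinAt
  have hφ : ContinuousOn (fun t => μ / m * D (h t)) (Ici 0) :=
    continuousOn_const.mul (hD.comp hhc hmaps)
  have hv : ∀ t ∈ Ici (0 : ℝ), HasDerivAt (deriv h) (-(μ / m * D (h t)) * deriv h t) t := by
    intro t ht
    refine (hdiff t ht).2.hasDerivAt.congr_deriv ?_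
    field_simp
    linarith [hode t ht]
  have hsol := eq_mul_exp_neg_integral_of_hasDerivAt_eq_neg_mul hφ hv
  refine monotoneOn_or_antitoneOn_Ici_of_deriv_sign (fun t ht => (hdiff t ht).1) ?_
  rcases le_total 0 (deriv h 0) with hnonneg | hnonpos
  · exact .inl fun t ht => hsol t ht ▸ mul_nonneg hnonneg (exp_pos _).le
  · exact .inr fun t ht => hsol t ht ▸ mul_nonpos_of_nonpos_of_nonneg hnonpos (exp_pos _).le

/-- Corollary 2.6: no rebound for a rigid body: a positive solution of
`m·ḧ = −μ·D(h)·ḣ` with `h(0) = h₀ > 0`, `ḣ(0) = ḣ₀ < 0` is monotone on `[0,∞)`. -/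
theorem no_rebound_rigid_body
    (m μ h0 hd0 : ℝ) (D : ℝ → ℝ) (h : ℝ → ℝ)
    (hm : 0 < m) (hμ : 0 < μ) (hh0 : 0 < h0) (hhd0 : hd0 < 0)
    (hDpos : ∀ x : ℝ, 0 < x → 0 < D x)
    (hDlip : ∀ x : ℝ, 0 < x → ∃ ε > 0, ∃ L : NNReal,
      LipschitzOnWith L D (Metric.ball x ε ∩ Set.Ioi 0))
    (hdiff : ∀ t : ℝ, 0 ≤ t →
      DifferentiableAt ℝ h t ∧ DifferentiableAt ℝ (deriv h) t)
    (hode : ∀ t : ℝ, 0 ≤ t →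
      m * deriv (deriv h) t = - μ * D (h t) * deriv h t)
    (hinit : h 0 = h0) (hinit' : deriv h 0 = hd0)
    (hpos : ∀ t : ℝ, 0 < t → 0 < h t) :
    MonotoneOn h (Set.Ici 0) ∨ AntitoneOn h (Set.Ici 0) :=
  no_rebound_rigid_body_general m μ h0 D h hm hh0 hDlip hdiff hode hinit hpos
end
end
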